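/- For every n ≥ 2 and 0 ≤ a ≤ n, the recursively defined operators on V_a^n satisfy X_{n−1}^+ X_{n−1}^- − X_{n−1}^- X_{n−1}^+ = (K_{n−1} − K_{n−1}^{-1})/(q − q^{-1}) as endomorphisms of V_a^n. -/

import Mathlib

noncomputable section

open scoped TensorProduct

set_option maxHeartbeats 1000000
set_option synthInstance.maxHeartbeats 400000

/-- The ground field `𝔸 = ℚ(q)`. -/
abbrev A : Type := RatFunc ℚ

/-- The element `q ∈ 𝔸`. -/
def qq : A := RatFunc.X

/-- The set of `a`-element subsets of `{0, 1, …, n-1}` (a model for the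
`a`-element subsets of `{1, …, n}`), the basis of `V_a^n`. -/
abbrev BS (n a : ℕ) : Type := {s : Finset ℕ // s ⊆ Finset.range n ∧ s.card = a}

instance BS.fintype (n a : ℕ) : Fintype (BS n a) :=
  Fintype.subtype ((Finset.range n).powerset.filter fun s => s.card = a) (by
    intro s
    simp [Finset.mem_powerset, Finset.mem_filter])

/-- The fundamental representation `V_a^n`, as the `𝔸`-vector space with basis the
`a`-element subsets of an `n`-element set. -/
abbrev V (n a : ℕ) : Type := BS n a → A

/-- `i₋₁ : V_{a-1}^{n-1} → V_a^n` (here with indices shifted: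
`iminus n a : V_a^n → V_{a+1}^{n+1}`), the inclusion of the summand of subsets containing
the new top element `n`. -/
def iminus (n a : ℕ) : V n a →ₗ[A] V (n+1) (a+1) where
  toFun f s := if h : n ∈ s.1 then
      f ⟨s.1.erase n, by
        constructor
        · intro x hx
          have hx' := Finset.mem_erase.mp hx
          have hx2 := s.2.1 hx'.2
          simp only [Finset.mem_range] at hx2 ⊢
          omega
        · rw [Finset.card_erase_of_mem h, s.2.2]; omega⟩
    else 0
  map_add' f g := by
    funext s
    simp only [Pi.add_apply]
    by_cases h : n ∈ s.1 <;> simp [h]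
  map_smul' c f := by
    funext s
    simp only [Pi.smul_apply, smul_eq_mul, RingHom.id_apply]
    by_cases h : n ∈ s.1 <;> simp [h]

/-- `i₀ : V_a^{n-1} → V_a^n` (as `izero n a : V_a^n → V_a^{n+1}`), the inclusion of the
summand of subsets not containing the new top element. -/
def izero (n a : ℕ) : V n a →ₗ[A] V (n+1) a where
  toFun f s := if h : n ∈ s.1 then 0 else
      f ⟨s.1, by
        refine ⟨fun x hx => ?_, s.2.2⟩
        have hx2 := s.2.1 hx
        simp only [Finset.mem_range] at hx2 ⊢
        rcases Nat.lt_succ_iff_lt_or_eq.mp hx2 with h' | h'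
        · exact h'
        · exact absurd (h' ▸ hx) h⟩
  map_add' f g := by
    funext s
    simp only [Pi.add_apply]
    by_cases h : n ∈ s.1 <;> simp [h]
  map_smul' c f := by
    funext s
    simp only [Pi.smul_apply, smul_eq_mul, RingHom.id_apply]
    by_cases h : n ∈ s.1 <;> simp [h]

/-- `p₋₁ : V_a^n → V_{a-1}^{n-1}` (as `pminus n a : V_{a+1}^{n+1} → V_a^n`), the projection
onto the summand of subsets containing the top element. -/
def pminus (n a : ℕ) : V (n+1) (a+1) →ₗ[A] V n a where
  toFun f t := f ⟨insert n t.1, by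
    have hn : n ∉ t.1 := fun h => by
      have := t.2.1 h; simp [Finset.mem_range] at this
    constructor
    · intro x hx
      rcases Finset.mem_insert.mp hx with rfl | hx
      · simp
      · have := t.2.1 hx; simp only [Finset.mem_range] at this ⊢; omega
    · rw [Finset.card_insert_of_notMem hn, t.2.2]⟩
  map_add' f g := rfl
  map_smul' c f := rfl

/-- `p₀ : V_a^n → V_a^{n-1}` (as `pzero n a : V_a^{n+1} → V_a^n`), the projection onto the
summand of subsets not containing the top element. -/
def pzero (n a : ℕ) : V (n+1) a →ₗ[A] V n a where
  toFun f t := f ⟨t.1, by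
    refine ⟨fun x hx => ?_, t.2.2⟩
    have := t.2.1 hx; simp only [Finset.mem_range] at this ⊢; omega⟩
  map_add' f g := rfl
  map_smul' c f := rfl

/-- The diagonal operator on `V_a^n` acting by the scalar `x` on basis subsets containing `m`
and by `y` on those not containing `m`; for `m = n-1` this is `x • i₋₁ p₋₁ + y • i₀ p₀`. -/
def diagOp (n a m : ℕ) (x y : A) : Module.End A (V n a) where
  toFun f s := (if m ∈ s.1 then x else y) * f s
  map_add' f g := by
    funext s
    simp only [Pi.add_apply]
    ring
  map_smul' c f := by
    funext s
    simp only [Pi.smul_apply, smul_eq_mul, RingHom.id_apply]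
    ring

/-- The recursively defined action of the generator `X_i^+` on `V_a^n`
(`XpOp n a i`, where `i` is the literal subscript, `1 ≤ i ≤ n-1`). -/
def XpOp : (n a i : ℕ) → Module.End A (V n a)
  | 0, _, _ => 0
  | 1, _, _ => 0
  | _+2, 0, _ => 0
  | n+2, a+1, i =>
    if a + 1 = n + 2 then 0
    else if i = n + 1 then
      (iminus (n+1) a) ∘ₗ (izero n a) ∘ₗ (pminus n a) ∘ₗ (pzero (n+1) (a+1))
    else
      (iminus (n+1) a) ∘ₗ (XpOp (n+1) a i) ∘ₗ (pminus (n+1) a)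
      + (izero (n+1) (a+1)) ∘ₗ (XpOp (n+1) (a+1) i) ∘ₗ (pzero (n+1) (a+1))

/-- The recursively defined action of the generator `X_i^-` on `V_a^n`. -/
def XmOp : (n a i : ℕ) → Module.End A (V n a)
  | 0, _, _ => 0
  | 1, _, _ => 0
  | _+2, 0, _ => 0
  | n+2, a+1, i =>
    if a + 1 = n + 2 then 0
    else if i = n + 1 then
      (izero (n+1) (a+1)) ∘ₗ (iminus n a) ∘ₗ (pzero n a) ∘ₗ (pminus (n+1) a)
    else
      (iminus (n+1) a) ∘ₗ (XmOp (n+1) a i) ∘ₗ (pminus (n+1) a)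
      + (izero (n+1) (a+1)) ∘ₗ (XmOp (n+1) (a+1) i) ∘ₗ (pzero (n+1) (a+1))

/-- The recursively defined action of the generator `K_i` on `V_a^n`.  The middle factors
`diagOp … 1 q` and `diagOp … q⁻¹ 1` are the operators `i₋₁ p₋₁ + q i₀ p₀` and
`q⁻¹ i₋₁ p₋₁ + i₀ p₀` of the recursion. -/
def KOp : (n a i : ℕ) → Module.End A (V n a)
  | 0, _, _ => 1
  | 1, _, _ => 1
  | _+2, 0, _ => 1
  | n+2, a+1, i =>
    if a + 1 = n + 2 then 1
    else if i = n + 1 then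
      (iminus (n+1) a) ∘ₗ (diagOp (n+1) a n 1 qq) ∘ₗ (pminus (n+1) a)
      + (izero (n+1) (a+1)) ∘ₗ (diagOp (n+1) (a+1) n qq⁻¹ 1) ∘ₗ (pzero (n+1) (a+1))
    else
      (iminus (n+1) a) ∘ₗ (KOp (n+1) a i) ∘ₗ (pminus (n+1) a)
      + (izero (n+1) (a+1)) ∘ₗ (KOp (n+1) (a+1) i) ∘ₗ (pzero (n+1) (a+1))

/-- The recursively defined action of `K_i⁻¹` on `V_a^n` (the inverse of `KOp`),
given by the same recursion with `q` and `q⁻¹` interchanged. -/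
def KinvOp : (n a i : ℕ) → Module.End A (V n a)
  | 0, _, _ => 1
  | 1, _, _ => 1
  | _+2, 0, _ => 1
  | n+2, a+1, i =>
    if a + 1 = n + 2 then 1
    else if i = n + 1 then
      (iminus (n+1) a) ∘ₗ (diagOp (n+1) a n 1 qq⁻¹) ∘ₗ (pminus (n+1) a)
      + (izero (n+1) (a+1)) ∘ₗ (diagOp (n+1) (a+1) n qq 1) ∘ₗ (pzero (n+1) (a+1))
    else
      (iminus (n+1) a) ∘ₗ (KinvOp (n+1) a i) ∘ₗ (pminus (n+1) a)
      + (izero (n+1) (a+1)) ∘ₗ (KinvOp (n+1) (a+1) i) ∘ₗ (pzero (n+1) (a+1))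
/-! ### The quantum group `U_q(sl_n)` by generators and relations.

We present the algebra with `m = n - 1` generators of each kind `K i, K i⁻¹, X i⁺, X i⁻`,
indexed by `i : Fin m` (so `i` corresponds to the subscript `i + 1 ∈ {1, …, n-1}`). -/

/-- Generators of `U_q(sl_n)` (with `m = n-1`). -/
inductive UqGen (m : ℕ) : Type
  | K : Fin m → UqGen m
  | Kinv : Fin m → UqGen m
  | Xp : Fin m → UqGen m
  | Xm : Fin m → UqGen m

/-- The free `𝔸`-algebra on the generators. -/
abbrev FA (m : ℕ) : Type := FreeAlgebra A (UqGen m)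

namespace FA
variable {m : ℕ}
def K (i : Fin m) : FA m := FreeAlgebra.ι A (UqGen.K i)
def Kinv (i : Fin m) : FA m := FreeAlgebra.ι A (UqGen.Kinv i)
def Xp (i : Fin m) : FA m := FreeAlgebra.ι A (UqGen.Xp i)
def Xm (i : Fin m) : FA m := FreeAlgebra.ι A (UqGen.Xm i)
end FA

/-- The Cartan integers `(i,j)` of type `A_m`: `2` if `i = j`, `-1` if `|i-j| = 1`,
`0` if `|i-j| ≥ 2`. -/
def cart {m : ℕ} (i j : Fin m) : ℤ :=
  if i = j then 2 else if (i : ℕ) + 1 = j ∨ (j : ℕ) + 1 = i then -1 else 0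

/-- The defining relations of `U_q(sl_n)`. -/
inductive uqRel (m : ℕ) : FA m → FA m → Prop
  | KKinv (i : Fin m) : uqRel m (FA.K i * FA.Kinv i) 1
  | KinvK (i : Fin m) : uqRel m (FA.Kinv i * FA.K i) 1
  | KK (i j : Fin m) : uqRel m (FA.K i * FA.K j) (FA.K j * FA.K i)
  | KXp (i j : Fin m) : uqRel m (FA.K i * FA.Xp j) (qq ^ (cart i j) • (FA.Xp j * FA.K i))
  | KXm (i j : Fin m) : uqRel m (FA.K i * FA.Xm j) (qq ^ (-cart i j) • (FA.Xm j * FA.K i))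
  | XpXm (i j : Fin m) :
      uqRel m (FA.Xp i * FA.Xm j - FA.Xm j * FA.Xp i)
        (if i = j then (qq - qq⁻¹)⁻¹ • (FA.K i - FA.Kinv i) else 0)
  | XpXp (i j : Fin m) (h : (i : ℕ) + 2 ≤ j ∨ (j : ℕ) + 2 ≤ i) :
      uqRel m (FA.Xp i * FA.Xp j) (FA.Xp j * FA.Xp i)
  | XmXm (i j : Fin m) (h : (i : ℕ) + 2 ≤ j ∨ (j : ℕ) + 2 ≤ i) :
      uqRel m (FA.Xm i * FA.Xm j) (FA.Xm j * FA.Xm i)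
  | serreP (i j : Fin m) (h : (i : ℕ) + 1 = j ∨ (j : ℕ) + 1 = i) :
      uqRel m (FA.Xp i ^ 2 * FA.Xp j - (qq + qq⁻¹) • (FA.Xp i * FA.Xp j * FA.Xp i)
        + FA.Xp j * FA.Xp i ^ 2) 0
  | serreM (i j : Fin m) (h : (i : ℕ) + 1 = j ∨ (j : ℕ) + 1 = i) :
      uqRel m (FA.Xm i ^ 2 * FA.Xm j - (qq + qq⁻¹) • (FA.Xm i * FA.Xm j * FA.Xm i)
        + FA.Xm j * FA.Xm i ^ 2) 0

/-- The quantum group `U_q(sl_{m+1})`, presented by generators and relations.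
For `U_q(sl_n)` take `m = n - 1`. -/
abbrev Uq (m : ℕ) : Type := RingQuot (uqRel m)

namespace Uq
variable {m : ℕ}
/-- The generator `K_{i+1}` of `U_q(sl_n)`. -/
def K (i : Fin m) : Uq m := RingQuot.mkAlgHom A (uqRel m) (FA.K i)
/-- The generator `K_{i+1}⁻¹` of `U_q(sl_n)`. -/
def Kinv (i : Fin m) : Uq m := RingQuot.mkAlgHom A (uqRel m) (FA.Kinv i)
/-- The generator `X_{i+1}^+` of `U_q(sl_n)`. -/
def Xp (i : Fin m) : Uq m := RingQuot.mkAlgHom A (uqRel m) (FA.Xp i)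
/-- The generator `X_{i+1}^-` of `U_q(sl_n)`. -/
def Xm (i : Fin m) : Uq m := RingQuot.mkAlgHom A (uqRel m) (FA.Xm i)
end Uq
/-! ### The duality maps `d_{a,n}`, triple invariants, and the pivotal elements `τ`. -/

/-- The sum-of-coefficients functional on `V_a^n`. -/
def sumF (n a : ℕ) : V n a →ₗ[A] A where
  toFun f := ∑ s : BS n a, f s
  map_add' f g := by simp [Finset.sum_add_distrib]
  map_smul' c f := by simp [Finset.mul_sum]

/-- The "trivial" map `V_a^n → (V_c^n)^*`; when `V_a^n` and `V_c^n` are one-dimensional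
(`a = 0` or `a = n`, and correspondingly for `c`) it sends the basis vector to the dual
basis vector.  Used for the base cases of `d_{a,n}`. -/
def dtriv (n a c : ℕ) : V n a →ₗ[A] Module.Dual A (V n c) :=
  LinearMap.smulRight (sumF n a) (sumF n c)

/-- The map `d_{a,n} : V_a^n → (V_{n-a}^n)^*`, defined recursively by
`d_{a,n} = i₀ ∘ d_{a-1,n-1} ∘ p₋₁ + (-q)^{-a} i₋₁ ∘ d_{a,n-1} ∘ p₀`, with both base cases
sending the basis vector to the dual basis vector.  Here `dmap n a c` has target
`(V_c^n)^*`, to be used with `c = n - a`. -/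
def dmap : (n a c : ℕ) → (V n a →ₗ[A] Module.Dual A (V n c))
  | 0, a, c => dtriv 0 a c
  | n+1, 0, c => dtriv (n+1) 0 c
  | n+1, a+1, c =>
    if a + 1 = n + 1 then dtriv (n+1) (a+1) c
    else
      match c with
      | 0 => 0
      | c+1 =>
        (pzero n (c+1)).dualMap ∘ₗ (dmap n a (c+1)) ∘ₗ (pminus n a)
        + ((-qq) ^ (a+1))⁻¹ •
            ((pminus n c).dualMap ∘ₗ (dmap n (a+1) c) ∘ₗ (pzero n (a+1)))

section voutvin

open TensorProduct

/-- First term of the recursion for `v_out`: `(-1)^c q^{b+c} (i₋₁ ⊗ i₀ ⊗ i₀)`. -/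
def vterm1 (n a b c : ℕ) (v : V n a ⊗[A] (V n b ⊗[A] V n c)) :
    V (n+1) (a+1) ⊗[A] (V (n+1) b ⊗[A] V (n+1) c) :=
  ((-1 : A)^c * qq^(b+c)) •
    (TensorProduct.map (iminus n a) (TensorProduct.map (izero n b) (izero n c)) v)

/-- Second term of the recursion for `v_out`: `(-1)^a q^c (i₀ ⊗ i₋₁ ⊗ i₀)`. -/
def vterm2 (n a b c : ℕ) (v : V n a ⊗[A] (V n b ⊗[A] V n c)) :
    V (n+1) a ⊗[A] (V (n+1) (b+1) ⊗[A] V (n+1) c) :=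
  ((-1 : A)^a * qq^c) •
    (TensorProduct.map (izero n a) (TensorProduct.map (iminus n b) (izero n c)) v)

/-- Third term of the recursion for `v_out`: `(-1)^b (i₀ ⊗ i₀ ⊗ i₋₁)`. -/
def vterm3 (n a b c : ℕ) (v : V n a ⊗[A] (V n b ⊗[A] V n c)) :
    V (n+1) a ⊗[A] (V (n+1) b ⊗[A] V (n+1) (c+1)) :=
  ((-1 : A)^b) •
    (TensorProduct.map (izero n a) (TensorProduct.map (izero n b) (iminus n c)) v)

/-- The triple invariant `v_out^n_{a,b,c} ∈ V_a^n ⊗ V_b^n ⊗ V_c^n` (intended for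
`a + b + c = n`), defined by the recursion of Definition `defn:trivalent-vertices`,
omitting any term with a negative subscript. -/
def voutE : (n a b c : ℕ) → V n a ⊗[A] (V n b ⊗[A] V n c)
  | 0, _, _, _ => (fun _ => (1:A)) ⊗ₜ[A] ((fun _ => (1:A)) ⊗ₜ[A] (fun _ => (1:A)))
  | n+1, 0, 0, 0 => 0
  | n+1, a+1, 0, 0 => vterm1 n a 0 0 (voutE n a 0 0)
  | n+1, 0, b+1, 0 => vterm2 n 0 b 0 (voutE n 0 b 0)
  | n+1, 0, 0, c+1 => vterm3 n 0 0 c (voutE n 0 0 c)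
  | n+1, a+1, b+1, 0 =>
      vterm1 n a (b+1) 0 (voutE n a (b+1) 0) + vterm2 n (a+1) b 0 (voutE n (a+1) b 0)
  | n+1, a+1, 0, c+1 =>
      vterm1 n a 0 (c+1) (voutE n a 0 (c+1)) + vterm3 n (a+1) 0 c (voutE n (a+1) 0 c)
  | n+1, 0, b+1, c+1 =>
      vterm2 n 0 b (c+1) (voutE n 0 b (c+1)) + vterm3 n 0 (b+1) c (voutE n 0 (b+1) c)
  | n+1, a+1, b+1, c+1 =>
      vterm1 n a (b+1) (c+1) (voutE n a (b+1) (c+1))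
      + vterm2 n (a+1) b (c+1) (voutE n (a+1) b (c+1))
      + vterm3 n (a+1) (b+1) c (voutE n (a+1) (b+1) c)

/-- First term of the recursion for `v_in`: `(-1)^c (…) ∘ (p₋₁ ⊗ p₀ ⊗ p₀)`. -/
def wterm1 (n a b c : ℕ) (φ : V n a ⊗[A] (V n b ⊗[A] V n c) →ₗ[A] A) :
    V (n+1) (a+1) ⊗[A] (V (n+1) b ⊗[A] V (n+1) c) →ₗ[A] A :=
  ((-1 : A)^c) •
    (φ ∘ₗ TensorProduct.map (pminus n a) (TensorProduct.map (pzero n b) (pzero n c)))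

/-- Second term of the recursion for `v_in`: `(-1)^a q^{-a} (…) ∘ (p₀ ⊗ p₋₁ ⊗ p₀)`. -/
def wterm2 (n a b c : ℕ) (φ : V n a ⊗[A] (V n b ⊗[A] V n c) →ₗ[A] A) :
    V (n+1) a ⊗[A] (V (n+1) (b+1) ⊗[A] V (n+1) c) →ₗ[A] A :=
  ((-1 : A)^a * (qq^a)⁻¹) •
    (φ ∘ₗ TensorProduct.map (pzero n a) (TensorProduct.map (pminus n b) (pzero n c)))

/-- Third term of the recursion for `v_in`: `(-1)^b q^{-a-b} (…) ∘ (p₀ ⊗ p₀ ⊗ p₋₁)`. -/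
def wterm3 (n a b c : ℕ) (φ : V n a ⊗[A] (V n b ⊗[A] V n c) →ₗ[A] A) :
    V (n+1) a ⊗[A] (V (n+1) b ⊗[A] V (n+1) (c+1)) →ₗ[A] A :=
  ((-1 : A)^b * (qq^(a+b))⁻¹) •
    (φ ∘ₗ TensorProduct.map (pzero n a) (TensorProduct.map (pzero n b) (pminus n c)))

/-- The triple coinvariant `v_in^n_{a,b,c} : V_a^n ⊗ V_b^n ⊗ V_c^n → 𝔸` (intended for
`a + b + c = n`), defined recursively, omitting any term with a negative subscript. -/
def vinE : (n a b c : ℕ) → (V n a ⊗[A] (V n b ⊗[A] V n c) →ₗ[A] A)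
  | 0, a, b, c =>
      (LinearMap.mul' A A) ∘ₗ
        TensorProduct.map (sumF 0 a)
          ((LinearMap.mul' A A) ∘ₗ TensorProduct.map (sumF 0 b) (sumF 0 c))
  | n+1, 0, 0, 0 => 0
  | n+1, a+1, 0, 0 => wterm1 n a 0 0 (vinE n a 0 0)
  | n+1, 0, b+1, 0 => wterm2 n 0 b 0 (vinE n 0 b 0)
  | n+1, 0, 0, c+1 => wterm3 n 0 0 c (vinE n 0 0 c)
  | n+1, a+1, b+1, 0 =>
      wterm1 n a (b+1) 0 (vinE n a (b+1) 0) + wterm2 n (a+1) b 0 (vinE n (a+1) b 0)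
  | n+1, a+1, 0, c+1 =>
      wterm1 n a 0 (c+1) (vinE n a 0 (c+1)) + wterm3 n (a+1) 0 c (vinE n (a+1) 0 c)
  | n+1, 0, b+1, c+1 =>
      wterm2 n 0 b (c+1) (vinE n 0 b (c+1)) + wterm3 n 0 (b+1) c (vinE n 0 (b+1) c)
  | n+1, a+1, b+1, c+1 =>
      wterm1 n a (b+1) (c+1) (vinE n a (b+1) (c+1))
      + wterm2 n (a+1) b (c+1) (vinE n (a+1) b (c+1))
      + wterm3 n (a+1) (b+1) c (vinE n (a+1) (b+1) c)

end voutvin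

/-- The operator `∏_{j=1}^{n-1} K_j^j` on `V_a^n`. -/
def kjOp (n a : ℕ) : Module.End A (V n a) :=
  (List.ofFn fun i : Fin (n-1) => (KOp n a ((i : ℕ)+1)) ^ ((i : ℕ)+1)).prod

/-- The pivotal operator `τ_n = ∏_{j=1}^{n-1} K_j^{j(n-j)}` on `V_a^n`. -/
def tauOp (n a : ℕ) : Module.End A (V n a) :=
  (List.ofFn fun i : Fin (n-1) => (KOp n a ((i : ℕ)+1)) ^ (((i : ℕ)+1) * (n - ((i : ℕ)+1)))).prod

/-- The inverse pivotal operator `τ_n⁻¹ = ∏_{j=1}^{n-1} K_j^{-j(n-j)}` on `V_a^n`. -/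
def tauinvOp (n a : ℕ) : Module.End A (V n a) :=
  (List.ofFn fun i : Fin (n-1) => (KinvOp n a ((i : ℕ)+1)) ^ (((i : ℕ)+1) * (n - ((i : ℕ)+1)))).prod

/-- The element `τ_n = ∏_{j=1}^{n-1} K_j^{j(n-j)} ∈ U_q(sl_n)`. -/
def tauU (n : ℕ) : Uq (n-1) :=
  (List.ofFn fun i : Fin (n-1) => (Uq.K i) ^ (((i : ℕ)+1) * (n - ((i : ℕ)+1)))).prod

/-- The Cartan integers for literal subscripts `i, j ∈ {1, …, n-1}`. -/
def cartN (i j : ℕ) : ℤ :=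
  if i = j then 2 else if i + 1 = j ∨ j + 1 = i then -1 else 0

/-! On `V_a^n` the operators `X_{n-1}^±` and `K_{n-1}` only involve the two top elements
`n-2, n-1` of a basis subset. Since `p₀ i₀ = p₋₁ i₋₁ = 1`, both products `X⁺X⁻` and `X⁻X⁺`
collapse to diagonal operators: `X⁺X⁻ = i₋₁ (i₀ p₀) p₋₁` and `X⁻X⁺ = i₀ (i₋₁ p₋₁) p₀`, and
`i₀ p₀`, `i₋₁ p₋₁` are the indicator operators of `n-2 ∉ s` and `n-2 ∈ s`. On the other
hand `K_{n-1}` is diagonal with eigenvalue `q^{[n-1 ∈ s] - [n-2 ∈ s]}`, so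
`(K - K⁻¹)/(q - q⁻¹)` is `+1`, `-1`, `0` on exactly the same pieces. -/

lemma qq_ne_zero : qq ≠ 0 := RatFunc.X_ne_zero

lemma qq_sub_qq_inv_ne_zero : qq - qq⁻¹ ≠ 0 := by
  intro h
  have hsq : qq * qq = 1 := by
    nth_rewrite 1 [sub_eq_zero.mp h]
    exact inv_mul_cancel₀ qq_ne_zero
  have hdeg : RatFunc.intDegree (qq * qq) = 2 := by
    rw [RatFunc.intDegree_mul qq_ne_zero qq_ne_zero]
    simp [qq]
  simp [hsq] at hdeg

lemma BS.bound_notMem {n a : ℕ} (t : BS n a) : n ∉ t.1 :=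
  fun h => by simpa using t.2.1 h

section Projections

variable (n a : ℕ)

@[simp]
lemma pminus_comp_iminus : pminus n a ∘ₗ iminus n a = LinearMap.id := by
  refine LinearMap.ext fun f => funext fun t => ?_
  simp [pminus, iminus, Finset.erase_eq_of_notMem t.bound_notMem]

@[simp]
lemma pzero_comp_izero : pzero n a ∘ₗ izero n a = LinearMap.id := by
  refine LinearMap.ext fun f => funext fun t => ?_
  simp [pzero, izero, t.bound_notMem]

lemma iminus_comp_pminus : iminus n a ∘ₗ pminus n a = diagOp (n+1) (a+1) n 1 0 := by
  refine LinearMap.ext fun f => funext fun s => ?_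
  by_cases h : n ∈ s.1 <;> simp [iminus, pminus, diagOp, h, Finset.insert_erase]

lemma izero_comp_pzero : izero n a ∘ₗ pzero n a = diagOp (n+1) a n 0 1 := by
  refine LinearMap.ext fun f => funext fun s => ?_
  by_cases h : n ∈ s.1 <;> simp [izero, pzero, diagOp, h]

end Projections

section DiagOp

variable (n a m : ℕ)

lemma diagOp_sub (x y x' y' : A) :
    diagOp n a m x y - diagOp n a m x' y' = diagOp n a m (x - x') (y - y') := by
  refine LinearMap.ext fun f => funext fun s => ?_
  by_cases h : m ∈ s.1 <;> simp [diagOp, h, sub_mul]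

lemma smul_diagOp (c x y : A) : c • diagOp n a m x y = diagOp n a m (c * x) (c * y) := by
  refine LinearMap.ext fun f => funext fun s => ?_
  by_cases h : m ∈ s.1 <;> simp [diagOp, h, mul_assoc]

lemma neg_diagOp (x y : A) : -diagOp n a m x y = diagOp n a m (-x) (-y) := by
  refine LinearMap.ext fun f => funext fun s => ?_
  by_cases h : m ∈ s.1 <;> simp [diagOp, h]

end DiagOp

section TopGenerators

variable {m b : ℕ}

lemma XpOp_top (hb : b ≠ m + 1) : XpOp (m+2) (b+1) (m+1)
    = iminus (m+1) b ∘ₗ izero m b ∘ₗ pminus m b ∘ₗ pzero (m+1) (b+1) := by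
  rw [XpOp, if_neg (by omega), if_pos rfl]

lemma XmOp_top (hb : b ≠ m + 1) : XmOp (m+2) (b+1) (m+1)
    = izero (m+1) (b+1) ∘ₗ iminus m b ∘ₗ pzero m b ∘ₗ pminus (m+1) b := by
  rw [XmOp, if_neg (by omega), if_pos rfl]

lemma KOp_top (hb : b ≠ m + 1) : KOp (m+2) (b+1) (m+1)
    = iminus (m+1) b ∘ₗ diagOp (m+1) b m 1 qq ∘ₗ pminus (m+1) b
      + izero (m+1) (b+1) ∘ₗ diagOp (m+1) (b+1) m qq⁻¹ 1 ∘ₗ pzero (m+1) (b+1) := by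
  rw [KOp, if_neg (by omega), if_pos rfl]

lemma KinvOp_top (hb : b ≠ m + 1) : KinvOp (m+2) (b+1) (m+1)
    = iminus (m+1) b ∘ₗ diagOp (m+1) b m 1 qq⁻¹ ∘ₗ pminus (m+1) b
      + izero (m+1) (b+1) ∘ₗ diagOp (m+1) (b+1) m qq 1 ∘ₗ pzero (m+1) (b+1) := by
  rw [KinvOp, if_neg (by omega), if_pos rfl]

lemma XpOp_mul_XmOp_top (hb : b ≠ m + 1) : XpOp (m+2) (b+1) (m+1) * XmOp (m+2) (b+1) (m+1)
    = iminus (m+1) b ∘ₗ diagOp (m+1) b m 0 1 ∘ₗ pminus (m+1) b := by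
  rw [XpOp_top hb, XmOp_top hb, Module.End.mul_eq_comp, ← izero_comp_pzero]
  simp only [LinearMap.comp_assoc]
  rw [← LinearMap.comp_assoc _ (izero _ _) (pzero _ _), pzero_comp_izero, LinearMap.id_comp,
    ← LinearMap.comp_assoc _ (iminus _ _) (pminus _ _), pminus_comp_iminus, LinearMap.id_comp]

lemma XmOp_mul_XpOp_top (hb : b ≠ m + 1) : XmOp (m+2) (b+1) (m+1) * XpOp (m+2) (b+1) (m+1)
    = izero (m+1) (b+1) ∘ₗ diagOp (m+1) (b+1) m 1 0 ∘ₗ pzero (m+1) (b+1) := by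
  rw [XpOp_top hb, XmOp_top hb, Module.End.mul_eq_comp, ← iminus_comp_pminus]
  simp only [LinearMap.comp_assoc]
  rw [← LinearMap.comp_assoc _ (iminus _ _) (pminus _ _), pminus_comp_iminus, LinearMap.id_comp,
    ← LinearMap.comp_assoc _ (izero _ _) (pzero _ _), pzero_comp_izero, LinearMap.id_comp]

lemma smul_KOp_sub_KinvOp_top (hb : b ≠ m + 1) :
    (qq - qq⁻¹)⁻¹ • (KOp (m+2) (b+1) (m+1) - KinvOp (m+2) (b+1) (m+1))
      = iminus (m+1) b ∘ₗ diagOp (m+1) b m 0 1 ∘ₗ pminus (m+1) b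
        - izero (m+1) (b+1) ∘ₗ diagOp (m+1) (b+1) m 1 0 ∘ₗ pzero (m+1) (b+1) := by
  have hdiff : KOp (m+2) (b+1) (m+1) - KinvOp (m+2) (b+1) (m+1)
      = iminus (m+1) b ∘ₗ diagOp (m+1) b m 0 (qq - qq⁻¹) ∘ₗ pminus (m+1) b
        + izero (m+1) (b+1) ∘ₗ diagOp (m+1) (b+1) m (-(qq - qq⁻¹)) 0 ∘ₗ pzero (m+1) (b+1) := by
    rw [KOp_top hb, KinvOp_top hb, add_sub_add_comm, ← LinearMap.comp_sub, ← LinearMap.sub_comp,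
      ← LinearMap.comp_sub, ← LinearMap.sub_comp, diagOp_sub, diagOp_sub, sub_self,
      neg_sub]
  have hc := qq_sub_qq_inv_ne_zero
  rw [hdiff, smul_add, ← LinearMap.comp_smul, ← LinearMap.smul_comp, ← LinearMap.comp_smul,
    ← LinearMap.smul_comp, smul_diagOp, smul_diagOp, mul_zero, mul_neg, inv_mul_cancel₀ hc,
    sub_eq_add_neg _ (izero _ _ ∘ₗ _), ← LinearMap.comp_neg, ← LinearMap.neg_comp, neg_diagOp,
    neg_zero]

end TopGenerators

theorem statement4_general (n : ℕ) (hn : 2 ≤ n) (a : ℕ) :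
    XpOp n a (n-1) * XmOp n a (n-1) - XmOp n a (n-1) * XpOp n a (n-1)
      = (qq - qq⁻¹)⁻¹ • (KOp n a (n-1) - KinvOp n a (n-1)) := by
  obtain ⟨m, rfl⟩ : ∃ m, n = m + 2 := ⟨n - 2, by omega⟩
  rcases a with _ | b
  · simp [XpOp, XmOp, KOp, KinvOp]
  by_cases hb : b = m + 1
  · simp [hb, XpOp, XmOp, KOp, KinvOp]
  · rw [show m + 2 - 1 = m + 1 by omega, XpOp_mul_XmOp_top hb, XmOp_mul_XpOp_top hb,
      smul_KOp_sub_KinvOp_top hb]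

/-- for every `n ≥ 2` and `0 ≤ a ≤ n`, the recursively defined operators
on `V_a^n` satisfy `X_{n-1}⁺ X_{n-1}⁻ - X_{n-1}⁻ X_{n-1}⁺ = (K_{n-1} - K_{n-1}⁻¹)/(q - q⁻¹)`
as endomorphisms of `V_a^n`. -/
theorem statement4 (n : ℕ) (hn : 2 ≤ n) (a : ℕ) (ha : a ≤ n) :
    XpOp n a (n-1) * XmOp n a (n-1) - XmOp n a (n-1) * XpOp n a (n-1)
      = (qq - qq⁻¹)⁻¹ • (KOp n a (n-1) - KinvOp n a (n-1)) :=
  statement4_general n hn a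

end
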